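/- Define recursively R_{n+1}(φ) as the 2×2 block matrix [[√(1-a²)·R_n(ψ), -a·H_n], [a·H_n, √(1-a²)·R_n(ψ)]] where a = √(2ⁿ/(2^{n+1}-1))·sin(φ/2), H_n is the n-qubit Walsh–Hadamard matrix, and ψ is chosen so that √(1-a²)·R_n(ψ) has diagonal entries cos(φ/2). If R_n(ψ) is unitary and satisfies H_n·R_n(ψ)·H_n = R_n(ψ)†, then R_{n+1}(φ) is unitary. -/
import Mathlib


open Matrix Real

/-- Induction step of the unitarity proof for the QARA rotation:
if `R` (the `2^n × 2^n` matrix `R_n(ψ)`, with `√(1-a²)·R` having diagonal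
entries `cos(φ/2)`) is unitary and satisfies `H·R·H = Rᵀ` with `H` the
`n`-qubit Walsh–Hadamard matrix, then the recursively defined block matrix
`R_{n+1}(φ)` is unitary. -/
theorem Rsucc_unitary (n : ℕ) (φ : ℝ)
    (H R : Matrix (Fin (2 ^ n)) (Fin (2 ^ n)) ℝ)
    (hHsymm : Hᵀ = H) (hHH : H * H = 1)
    (hRunit : R * Rᵀ = 1 ∧ Rᵀ * R = 1)
    (hConj : H * R * H = Rᵀ)
    (a : ℝ) (ha : a = Real.sqrt ((2 ^ n : ℝ) / (2 ^ (n + 1) - 1)) * Real.sin (φ / 2))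
    (hdiag : ∀ i, (Real.sqrt (1 - a ^ 2) • R) i i = Real.cos (φ / 2)) :
    (Matrix.fromBlocks (Real.sqrt (1 - a ^ 2) • R) (-(a • H)) (a • H)
        (Real.sqrt (1 - a ^ 2) • R)) *
      (Matrix.fromBlocks (Real.sqrt (1 - a ^ 2) • R) (-(a • H)) (a • H)
        (Real.sqrt (1 - a ^ 2) • R))ᵀ = 1 ∧
    (Matrix.fromBlocks (Real.sqrt (1 - a ^ 2) • R) (-(a • H)) (a • H)
        (Real.sqrt (1 - a ^ 2) • R))ᵀ *
      (Matrix.fromBlocks (Real.sqrt (1 - a ^ 2) • R) (-(a • H)) (a • H)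
        (Real.sqrt (1 - a ^ 2) • R)) = 1 := by
  set b : ℝ := Real.sqrt (1 - a ^ 2) with hb
  -- a² ≤ 1
  have hden : (0:ℝ) < 2 ^ (n + 1) - 1 := by
    have : (1:ℝ) < 2 ^ (n + 1) := by
      exact one_lt_pow₀ (by norm_num) (Nat.succ_ne_zero n)
    linarith
  have hc0 : (0:ℝ) ≤ (2 ^ n : ℝ) / (2 ^ (n + 1) - 1) :=
    div_nonneg (by positivity) hden.le
  have hc1 : (2 ^ n : ℝ) / (2 ^ (n + 1) - 1) ≤ 1 := by
    rw [div_le_one hden]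
    have h1 : (1:ℝ) ≤ 2 ^ n := one_le_pow₀ (by norm_num)
    have : (2:ℝ) ^ (n+1) = 2 * 2 ^ n := by ring
    linarith
  have ha2 : a ^ 2 ≤ 1 := by
    rw [ha, mul_pow, Real.sq_sqrt hc0]
    calc (2 ^ n : ℝ) / (2 ^ (n + 1) - 1) * Real.sin (φ / 2) ^ 2
        ≤ 1 * 1 := by
          apply mul_le_mul hc1 (Real.sin_sq_le_one _) (sq_nonneg _) one_pos.le
      _ = 1 := one_mul 1
  have hbb : b * b + a * a = 1 := by
    have : b * b = 1 - a ^ 2 := Real.mul_self_sqrt (by linarith)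
    rw [this]; ring
  -- commutation
  have hRH : H * Rᵀ = R * H := by
    rw [← hConj, ← mul_assoc, ← mul_assoc, hHH, one_mul]
  have hRH' : Rᵀ * H = H * R := by
    rw [← hConj, mul_assoc, hHH, mul_one]
  refine ⟨?_, ?_⟩ <;>
  · rw [Matrix.fromBlocks_transpose, Matrix.fromBlocks_multiply]
    simp [Matrix.transpose_smul, hHsymm, Matrix.smul_mul, Matrix.mul_smul, smul_smul,
      hRunit.1, hRunit.2, hHH, hRH, hRH', ← add_smul, hbb, mul_comm a b,
      add_comm (a * a) (b * b), Matrix.fromBlocks_one]
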